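/- arXiv:1711.08301 — 4 statements merged into one kernel-verified Lean document; each statement's English description precedes it below -/
import Mathlib

section
/- Let k <= n be positive integers and K a field. Let M be the set of k x n matrices over K of rank k with no zero columns. Then the action of U x T on M given by (u,t).m = u m t is free, where U is the group of lower-triangular unipotent k x k matrices and T is the group of invertible diagonal n x n matrices. -/
/-- Let `k ≤ n` be positive integers and `K` a field.  The action `(u, t).m = u m t` of `U × T`
on the set of full-rank `k × n` matrices over `K` with no zero columns is free, where `U` is the
group of lower-triangular unipotent `k × k` matrices and `T` the invertible diagonal `n × n`
matrices. -/
theorem stmt3 (k n : ℕ) (hk : 0 < k) (hkn : k ≤ n) (K : Type*) [Field K]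
    (m : Matrix (Fin k) (Fin n) K) (hrank : m.rank = k)
    (hcol : ∀ j, ∃ i, m i j ≠ 0)
    (u : Matrix (Fin k) (Fin k) K)
    (hu1 : ∀ i, u i i = 1) (hu2 : ∀ i j, i < j → u i j = 0)
    (d : Fin n → K) (hd : ∀ j, d j ≠ 0)
    (h : u * m * Matrix.diagonal d = m) :
    u = 1 ∧ Matrix.diagonal d = 1 := by
  classical
  have hd1 : ∀ j, d j = 1 := by
    intro j
    obtain ⟨i0, hi0⟩ := hcol j
    set S := Finset.univ.filter (fun i => m i j ≠ 0) with hS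
    have hSne : S.Nonempty := ⟨i0, by simp [hS, hi0]⟩
    set i := S.min' hSne with hi
    have hiS : i ∈ S := S.min'_mem hSne
    have himj : m i j ≠ 0 := by simpa [hS] using hiS
    have hlt : ∀ l, l < i → m l j = 0 := by
      intro l hl
      by_contra hml
      exact absurd (S.min'_le l (by simp [hS, hml])) (not_le.mpr hl)
    have key := congrFun (congrFun h i) j
    have hkey : (u * m) i j * d j = m i j := by
      simpa [Matrix.mul_diagonal] using key
    have hsum : (u * m) i j = m i j := by
      rw [Matrix.mul_apply]
      rw [Finset.sum_eq_single i]
      · rw [hu1]; ring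
      · intro l _ hl
        rcases lt_or_gt_of_ne hl with h1 | h1
        · simp [hlt l h1]
        · simp [hu2 i l h1]
      · simp
    rw [hsum] at hkey
    exact mul_left_cancel₀ himj (by rw [hkey, mul_one])
  have hD : Matrix.diagonal d = 1 := by
    have : d = fun _ => 1 := funext hd1
    rw [this]
    exact Matrix.diagonal_one
  rw [hD, Matrix.mul_one] at h
  have hsurj : Function.Surjective m.mulVecLin := by
    rw [← LinearMap.range_eq_top]
    apply Submodule.eq_top_of_finrank_eq
    have : Module.finrank K (LinearMap.range m.mulVecLin) = m.rank := rfl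
    rw [this, hrank]
    simp
  have hu : ∀ y, u.mulVec y = y := by
    intro y
    obtain ⟨x, hx⟩ := hsurj y
    have : u.mulVec (m.mulVec x) = m.mulVec x := by
      rw [Matrix.mulVec_mulVec, h]
    simpa [Matrix.mulVecLin_apply] using hx ▸ this
  refine ⟨?_, hD⟩
  ext i j
  have := congrFun (hu (Pi.single j 1)) i
  simpa [Matrix.mulVec_single, Matrix.one_apply, Matrix.mulVec, dotProduct,
    Pi.single_apply, eq_comm] using this
end

section
/- If m is an invertible k x k matrix over a field, then there exists a chain of subsets empty set = J_0 ⊂ J_1 ⊂ ... ⊂ J_k = {1,...,k} with |J_r| = r such that for each r the minor of m with row set {1,...,r} and column set J_r is nonzero. -/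
/-!
Greedy column selection. If the columns `J` (with `|J| = r`) of the top `r` rows of `m` are
linearly independent, view them inside the top `r + 1` rows, where they stay independent. These
`r + 1` rows are independent rows of `m`, so their columns span a space of dimension `r + 1`, and
some column lies outside the span of the `r` columns of `J`; adding it keeps independence. A
square minor is nonzero exactly when its columns are independent, so starting from `∅` this
builds the chain `J₀ ⊂ J₁ ⊂ ⋯ ⊂ J_k`.
-/

namespace Matrix

open Submodule

variable {K : Type*} [Field K]

theorem det_submatrix_ne_zero_iff_linearIndepOn_col {n ι : Type*} [Fintype n] [DecidableEq n]
    (A : Matrix n ι K) {e : n → ι} (he : Function.Injective e) :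
    (A.submatrix id e).det ≠ 0 ↔ LinearIndepOn K A.col (Set.range e) := by
  rw [linearIndepOn_range_iff he, ← isUnit_iff_ne_zero, ← isUnit_iff_isUnit_det,
    ← linearIndependent_cols_iff_isUnit]
  rfl

theorem linearIndepOn_col_of_submatrix {m n ι : Type*} (A : Matrix m ι K) (f : n → m)
    {s : Set ι} (h : LinearIndepOn K (A.submatrix f id).col s) : LinearIndepOn K A.col s :=
  h.of_comp (LinearMap.funLeft K K f)

theorem exists_linearIndepOn_col_insert {n ι : Type*} [Fintype n] [Fintype ι]
    (A : Matrix n ι K) (hA : LinearIndependent K A.row) {J : Finset ι}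
    (hJ : LinearIndepOn K A.col J) (hlt : J.card < Fintype.card n) :
    ∃ j ∉ J, LinearIndepOn K A.col (insert j J) := by
  classical
  obtain ⟨j, hj⟩ : ∃ j, A.col j ∉ span K (A.col '' J) := by
    by_contra! h
    have hspan : span K (Set.range A.col) ≤ span K (A.col '' J) :=
      span_le.mpr (Set.range_subset_iff.mpr h)
    have hrank := Submodule.finrank_mono hspan
    rw [← rank_eq_finrank_span_cols, hA.rank_matrix, ← Finset.coe_image] at hrank
    exact hlt.not_ge <| hrank.trans <| (finrank_span_finset_le_card _).trans Finset.card_image_le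
  exact ⟨j, fun hjJ => hj (subset_span ⟨j, hjJ, rfl⟩), hJ.insert hj⟩

section TopMinor

variable {n : ℕ} {ι : Type*} (m : Matrix (Fin n) ι K)

/-- The condition `Δ_{{1,…,|J|}, J}(m) ≠ 0`, phrased without ordering the columns (see
`det_submatrix_ne_zero_iff_linearIndepOn_col`). -/
def IsTopMinorNonsingular (J : Finset ι) : Prop :=
  ∃ hJ : J.card ≤ n, LinearIndepOn K (m.submatrix (Fin.castLE hJ) id).col J

variable {m}

theorem isTopMinorNonsingular_iff {r : ℕ} (hr : r ≤ n) {J : Finset ι} (hJ : J.card = r) :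
    m.IsTopMinorNonsingular J ↔ LinearIndepOn K (m.submatrix (Fin.castLE hr) id).col J := by
  subst hJ
  exact ⟨fun ⟨_, h⟩ => h, fun h => ⟨hr, h⟩⟩

theorem isTopMinorNonsingular_empty : m.IsTopMinorNonsingular ∅ :=
  ⟨by simp, by simpa only [Finset.coe_empty] using linearIndepOn_empty K _⟩

variable [DecidableEq ι]

theorem IsTopMinorNonsingular.exists_insert [Fintype ι] (hm : LinearIndependent K m.row)
    {J : Finset ι} (hJ : m.IsTopMinorNonsingular J) (hlt : J.card < n) :
    ∃ j ∉ J, m.IsTopMinorNonsingular (insert j J) := by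
  obtain ⟨_, hJ⟩ := hJ
  set A := m.submatrix (Fin.castLE hlt) id
  have hA : LinearIndependent K A.row := hm.comp _ (Fin.castLE_injective hlt)
  have hJA : LinearIndepOn K A.col J :=
    linearIndepOn_col_of_submatrix A (Fin.castLE J.card.le_succ) hJ
  obtain ⟨j, hj, hind⟩ := A.exists_linearIndepOn_col_insert hA hJA (by simp)
  refine ⟨j, hj, (isTopMinorNonsingular_iff hlt (Finset.card_insert_of_notMem hj)).mpr ?_⟩
  simpa using hind

variable (m)

open Classical in
noncomputable def extendTopMinor (J : Finset ι) : Finset ι :=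
  if h : ∃ j ∉ J, m.IsTopMinorNonsingular (insert j J) then insert h.choose J else J

noncomputable def topMinorFlag (r : ℕ) : Finset ι :=
  (extendTopMinor m)^[r] ∅

theorem topMinorFlag_succ (r : ℕ) :
    m.topMinorFlag (r + 1) = m.extendTopMinor (m.topMinorFlag r) :=
  Function.iterate_succ_apply' _ _ _

theorem subset_extendTopMinor (J : Finset ι) : J ⊆ m.extendTopMinor J := by
  unfold extendTopMinor
  split_ifs
  exacts [Finset.subset_insert _ _, subset_rfl]

variable {m}

theorem IsTopMinorNonsingular.extendTopMinor [Fintype ι] (hm : LinearIndependent K m.row)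
    {J : Finset ι} (hJ : m.IsTopMinorNonsingular J) (hlt : J.card < n) :
    (m.extendTopMinor J).card = J.card + 1 ∧ m.IsTopMinorNonsingular (m.extendTopMinor J) := by
  have h := hJ.exists_insert hm hlt
  rw [Matrix.extendTopMinor, dif_pos h]
  exact ⟨Finset.card_insert_of_notMem h.choose_spec.1, h.choose_spec.2⟩

theorem topMinorFlag_spec [Fintype ι] (hm : LinearIndependent K m.row) {r : ℕ} (hr : r ≤ n) :
    (m.topMinorFlag r).card = r ∧ m.IsTopMinorNonsingular (m.topMinorFlag r) := by
  induction r with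
  | zero => exact ⟨rfl, isTopMinorNonsingular_empty⟩
  | succ r ih =>
    obtain ⟨hcard, hJ⟩ := ih (by omega)
    rw [topMinorFlag_succ]
    simpa only [hcard] using hJ.extendTopMinor hm (by omega)

theorem topMinorFlag_ssubset_succ [Fintype ι] (hm : LinearIndependent K m.row) {r : ℕ}
    (hr : r < n) : m.topMinorFlag r ⊂ m.topMinorFlag (r + 1) := by
  refine Finset.ssubset_iff_subset_ne.mpr ⟨?_, fun h => ?_⟩
  · rw [topMinorFlag_succ]
    exact subset_extendTopMinor m _
  · have := congrArg Finset.card h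
    rw [(topMinorFlag_spec hm hr.le).1, (topMinorFlag_spec hm hr).1] at this
    omega

end TopMinor

end Matrix

/-- If `m` is an invertible `k × k` matrix over a field, then there is a chain of subsets
`∅ = J₀ ⊂ J₁ ⊂ ⋯ ⊂ J_k = {1, …, k}` with `|J_r| = r` such that for each `r` the minor of `m`
with row set `{1, …, r}` and column set `J_r` is nonzero. -/
theorem stmt4 {K : Type*} [Field K] {k : ℕ} (m : Matrix (Fin k) (Fin k) K)
    (hm : IsUnit m.det) :
    ∃ J : ℕ → Finset (Fin k),
      J 0 = ∅ ∧ J k = Finset.univ ∧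
      (∀ r ≤ k, (J r).card = r) ∧
      (∀ r < k, J r ⊂ J (r + 1)) ∧
      (∀ r (hr : r ≤ k) (hc : (J r).card = r),
        Matrix.det (Matrix.of fun i j : Fin r =>
          m (Fin.castLE hr i) ((J r).orderEmbOfFin hc j)) ≠ 0) := by
  have hrows : LinearIndependent K m.row :=
    Matrix.linearIndependent_rows_iff_isUnit.mpr ((Matrix.isUnit_iff_isUnit_det m).mpr hm)
  have hflag (r : ℕ) (hr : r ≤ k) := Matrix.topMinorFlag_spec hrows hr
  refine ⟨m.topMinorFlag, rfl, ?_, fun r hr => (hflag r hr).1,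
    fun r hr => Matrix.topMinorFlag_ssubset_succ hrows hr, fun r hr hc => ?_⟩
  · exact Finset.eq_univ_of_card _ ((hflag k le_rfl).1.trans (Fintype.card_fin k).symm)
  · have hJ := (Matrix.isTopMinorNonsingular_iff hr hc).mp (hflag r hr).2
    rw [← Finset.range_orderEmbOfFin _ hc] at hJ
    exact ((m.submatrix (Fin.castLE hr) id).det_submatrix_ne_zero_iff_linearIndepOn_col
      (Finset.orderEmbOfFin _ hc).injective).mpr hJ
end

section
/- Fix k >= 1. For each Fubini word w in W_{n,k} with associated permutation pi(w) in S_k, define dim(w) = -inv(pi(w)) - n + sum_{i=1}^n pi(w)^{-1}_{w_i}. Then the statistic dim is Mahonian on W_{n,k}: sum over w in W_{n,k} of q^{dim(w)} equals [k]!_q * Stir_q(n,k). -/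
/-- The `q`-analogue `[k]_q = 1 + q + … + q^{k-1}`. -/
noncomputable def qnat (k : ℕ) : Polynomial ℤ :=
  ∑ i ∈ Finset.range k, Polynomial.X ^ i

/-- The `q`-factorial `[k]!_q = [k]_q [k-1]_q ⋯ [1]_q`. -/
noncomputable def qFactorial (k : ℕ) : Polynomial ℤ :=
  ∏ j ∈ Finset.range k, qnat (j + 1)

/-- The `q`-Stirling numbers. -/
noncomputable def qStirling : ℕ → ℕ → Polynomial ℤ
  | 0, 0 => 1
  | 0, _ + 1 => 0
  | _ + 1, 0 => 0
  | n + 1, k + 1 => qStirling n k + qnat (k + 1) * qStirling n (k + 1)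

/-- The position (0-indexed) of the first occurrence of the letter `c` in the word `w`. -/
noncomputable def firstOcc (n k : ℕ) (w : Fin n → Fin k) (c : Fin k) : ℕ :=
  sInf {i : ℕ | ∃ h : i < n, w ⟨i, h⟩ = c}

/-- `inv(π(w))`: the number of inversions of the permutation `π(w) ∈ S_k` formed by the
initial letters of `w`, i.e. the number of pairs of letters `c' < c` such that the first
occurrence of `c` precedes the first occurrence of `c'`. -/
noncomputable def invStat (n k : ℕ) (w : Fin n → Fin k) : ℕ :=
  (Finset.univ.filter fun p : Fin k × Fin k =>
    firstOcc n k w p.1 < firstOcc n k w p.2 ∧ p.2 < p.1).card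

/-- `π(w)⁻¹_c`: the (1-indexed) position of the letter `c` in `π(w)`, i.e. the number of
letters whose first occurrence is no later than that of `c`. -/
noncomputable def posStat (n k : ℕ) (w : Fin n → Fin k) (c : Fin k) : ℕ :=
  (Finset.univ.filter fun c' : Fin k =>
    firstOcc n k w c' ≤ firstOcc n k w c).card

/-- `dim(w) = -inv(π(w)) - n + ∑_{i=1}^n π(w)⁻¹_{w_i}`. -/
noncomputable def dimStat (n k : ℕ) (w : Fin n → Fin k) : ℤ :=
  -(invStat n k w : ℤ) - (n : ℤ) + ∑ i : Fin n, (posStat n k w (w i) : ℤ)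

/-! Strip the last letter `c` of a word in `W_{n+1,k}`. If `c` occurs earlier, the first
occurrences, hence `π(w)`, do not change and `dim` grows by `π(w)⁻¹_c - 1`, which runs through
`0, …, k-1` as `c` does. If `c` is new, it is appended to `π(w)`: this adds the `k - c` inversions
`(c', c)` with `c' > c` and the summand `π(w)⁻¹_c = k`, so `dim` grows by `c - 1`, again ranging
over `0, …, k-1`, while the rest of the word is a Fubini word on the other `k - 1` letters. Hence
the generating function `D(n,k)` of `dim` on `W_{n,k}` satisfies
`D(n+1,k) = [k]_q (D(n,k-1) + D(n,k))`, the recursion of `[k]!_q Stir_q(n,k)`. -/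
open Finset Function

section FirstOcc

variable {n k : ℕ}

lemma firstOcc_spec {w : Fin n → Fin k} {c : Fin k} (h : ∃ i, w i = c) :
    ∃ h' : firstOcc n k w c < n, w ⟨firstOcc n k w c, h'⟩ = c := by
  obtain ⟨i, rfl⟩ := h
  exact Nat.sInf_mem (s := {j | ∃ h : j < n, w ⟨j, h⟩ = w i}) ⟨i, i.isLt, rfl⟩

lemma firstOcc_le (w : Fin n → Fin k) (i : Fin n) : firstOcc n k w (w i) ≤ i :=
  Nat.sInf_le ⟨i.isLt, rfl⟩

lemma firstOcc_injective {w : Fin n → Fin k} (hw : Surjective w) :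
    Injective (firstOcc n k w) := by
  intro a b h
  obtain ⟨ha, hwa⟩ := firstOcc_spec (hw a)
  obtain ⟨hb, hwb⟩ := firstOcc_spec (hw b)
  rw [← hwa, ← hwb]
  exact congrArg w (Fin.ext h)

lemma firstOcc_comp_of_injective {k' : ℕ} {f : Fin k → Fin k'} (hf : Injective f)
    (v : Fin n → Fin k) (c : Fin k) : firstOcc n k' (f ∘ v) (f c) = firstOcc n k v c := by
  simp only [firstOcc, comp_apply, hf.eq_iff]

lemma snoc_mk_of_lt {α : Type*} (w : Fin n → α) (c : α) {i : ℕ} (hi : i < n) :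
    (Fin.snoc w c : Fin (n + 1) → α) ⟨i, hi.trans n.lt_succ_self⟩ = w ⟨i, hi⟩ :=
  Fin.snoc_castSucc (α := fun _ => α) c w ⟨i, hi⟩

lemma firstOcc_snoc_of_exists {w : Fin n → Fin k} {c c' : Fin k} (h : ∃ i, w i = c') :
    firstOcc (n + 1) k (Fin.snoc w c) c' = firstOcc n k w c' := by
  obtain ⟨hlt, hw⟩ := firstOcc_spec h
  have hle : firstOcc (n + 1) k (Fin.snoc w c) c' ≤ firstOcc n k w c' := by
    simpa only [snoc_mk_of_lt w c hlt, hw] using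
      firstOcc_le (Fin.snoc w c : Fin (n + 1) → Fin k) ⟨_, hlt.trans n.lt_succ_self⟩
  refine hle.antisymm ?_
  obtain ⟨_, hsnoc⟩ := firstOcc_spec (w := (Fin.snoc w c : Fin (n + 1) → Fin k)) (c := c')
    ⟨_, snoc_mk_of_lt w c hlt ▸ hw⟩
  have hn := hle.trans_lt hlt
  rw [snoc_mk_of_lt w c hn] at hsnoc
  simpa only [hsnoc] using firstOcc_le w ⟨_, hn⟩

lemma firstOcc_snoc_self {w : Fin n → Fin k} {c : Fin k} (h : ∀ i, w i ≠ c) :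
    firstOcc (n + 1) k (Fin.snoc w c) c = n := by
  have hle : firstOcc (n + 1) k (Fin.snoc w c) c ≤ n := by
    simpa using firstOcc_le (Fin.snoc w c : Fin (n + 1) → Fin k) (Fin.last n)
  refine hle.antisymm (not_lt.1 fun hn => ?_)
  obtain ⟨_, hsnoc⟩ := firstOcc_spec (w := (Fin.snoc w c : Fin (n + 1) → Fin k)) (c := c)
    ⟨Fin.last n, by simp⟩
  rw [snoc_mk_of_lt w c hn] at hsnoc
  exact h _ hsnoc

lemma firstOcc_snoc_of_surjective {w : Fin n → Fin k} (hw : Surjective w) (c : Fin k) :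
    firstOcc (n + 1) k (Fin.snoc w c) = firstOcc n k w :=
  funext fun c' => firstOcc_snoc_of_exists (hw c')

lemma firstOcc_snoc_succAbove_comp {m : ℕ} {v : Fin n → Fin m} (hv : Surjective v)
    (c : Fin (m + 1)) :
    firstOcc (n + 1) (m + 1) (Fin.snoc (c.succAbove ∘ v) c) = c.insertNth n (firstOcc n m v) := by
  funext a
  refine Fin.succAboveCases c ?_ (fun j => ?_) a
  · rw [Fin.insertNth_apply_same]
    exact firstOcc_snoc_self fun i => Fin.succAbove_ne c (v i)
  · obtain ⟨i, hi⟩ := hv j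
    rw [Fin.insertNth_apply_succAbove, firstOcc_snoc_of_exists ⟨i, by simp [hi]⟩,
      firstOcc_comp_of_injective Fin.succAbove_right_injective]

end FirstOcc

section Counting

variable {α : Type*} [LinearOrder α] {k m : ℕ}

def invCount (f : Fin k → α) : ℕ :=
  #{p : Fin k × Fin k | f p.1 < f p.2 ∧ p.2 < p.1}

def posCount (f : Fin k → α) (c : Fin k) : ℕ :=
  #{c' | f c' ≤ f c}

lemma invCount_eq_sum (f : Fin k → α) :
    invCount f = ∑ b, ∑ a, if f a < f b ∧ b < a then 1 else 0 := by
  rw [invCount, card_filter, Fintype.sum_prod_type_right]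

lemma posCount_eq_sum (f : Fin k → α) (c : Fin k) :
    posCount f c = ∑ a, if f a ≤ f c then 1 else 0 :=
  card_filter _ _

lemma one_le_posCount (f : Fin k → α) (c : Fin k) : 1 ≤ posCount f c :=
  card_pos.2 ⟨c, by simp⟩

lemma posCount_le (f : Fin k → α) (c : Fin k) : posCount f c ≤ k :=
  (card_filter_le _ _).trans (card_univ.trans (Fintype.card_fin k)).le

lemma posCount_lt_posCount {f : Fin k → α} {a b : Fin k} (h : f a < f b) :
    posCount f a < posCount f b := by
  refine card_lt_card ⟨fun c hc => ?_, fun hsub => ?_⟩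
  · simp only [mem_filter, mem_univ, true_and] at hc ⊢
    exact hc.trans h.le
  · have := hsub (mem_filter.2 ⟨mem_univ b, le_rfl⟩)
    simp only [mem_filter, mem_univ, true_and] at this
    exact this.not_gt h

lemma posCount_injective {f : Fin k → α} (hf : Injective f) : Injective (posCount f) := by
  intro a b h
  by_contra hab
  rcases (hf.ne hab).lt_or_gt with hlt | hlt
  · exact (posCount_lt_posCount hlt).ne h
  · exact (posCount_lt_posCount hlt).ne' h

/-- For injective `f`, `c ↦ posCount f c - 1` is the rank of `f c` among the values of `f`. -/
lemma sum_posCount_sub_one {M : Type*} [AddCommMonoid M] {f : Fin k → α} (hf : Injective f)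
    (g : ℕ → M) : ∑ c, g (posCount f c - 1) = ∑ j ∈ range k, g j := by
  set rank : Fin k → Fin k := fun c =>
    ⟨posCount f c - 1, by have := one_le_posCount f c; have := posCount_le f c; omega⟩
  have hrank : Bijective rank := Finite.injective_iff_bijective.1 fun a b h => by
    have := one_le_posCount f a
    have := one_le_posCount f b
    exact posCount_injective hf (by simp only [rank, Fin.mk.injEq] at h; omega)
  rw [← Fin.sum_univ_eq_sum_range]
  exact hrank.sum_comp (fun j : Fin k => g j)

variable {f : Fin m → α} {x : α}

lemma invCount_insertNth (hf : ∀ j, f j < x) (c : Fin (m + 1)) :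
    invCount (c.insertNth x f) = invCount f + (m - c) := by
  set g : Fin (m + 1) → α := c.insertNth x f
  have hnew : ∑ a, (if g a < g c ∧ c < a then 1 else 0) = m - c := by
    have : ({a | g a < g c ∧ c < a} : Finset (Fin (m + 1))) = Ioi c := by
      ext a
      simp only [mem_filter, mem_univ, true_and, mem_Ioi, and_iff_right_iff_imp]
      intro hca
      obtain ⟨j, rfl⟩ := Fin.exists_succAbove_eq hca.ne'
      simpa [g] using hf j
    rw [← card_filter, this, Fin.card_Ioi]
    omega
  have hold : ∀ j, ∑ a, (if g a < g (c.succAbove j) ∧ c.succAbove j < a then 1 else 0) =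
      ∑ i, if f i < f j ∧ j < i then 1 else 0 := fun j => by
    simp [g, Fin.sum_univ_succAbove _ c, (hf j).not_gt, Fin.succAbove_lt_succAbove_iff]
  rw [invCount_eq_sum, invCount_eq_sum, Fin.sum_univ_succAbove _ c, hnew,
    Fintype.sum_congr _ _ hold, add_comm]

lemma posCount_insertNth_succAbove (hf : ∀ j, f j < x) (c : Fin (m + 1)) (j : Fin m) :
    posCount (c.insertNth x f) (c.succAbove j) = posCount f j := by
  simp [posCount_eq_sum, Fin.sum_univ_succAbove _ c, (hf j).not_ge]

lemma posCount_insertNth_self (hf : ∀ j, f j < x) (c : Fin (m + 1)) :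
    posCount (c.insertNth x f) c = m + 1 := by
  rw [posCount, filter_true_of_mem, card_univ, Fintype.card_fin]
  intro a _
  refine Fin.succAboveCases c ?_ (fun j => ?_) a <;> simp [(hf _).le]

end Counting

section Words

variable {α : Type*} {n m : ℕ}

lemma surjective_snoc_iff_of_exists {w : Fin n → α} {c : α} (h : ∃ i, w i = c) :
    Surjective (Fin.snoc w c : Fin (n + 1) → α) ↔ Surjective w := by
  rw [← Set.range_eq_univ, ← Set.range_eq_univ, Fin.range_snoc,
    Set.insert_eq_of_mem (Set.mem_range.2 h)]

lemma surjective_snoc_succAbove_comp_iff {v : Fin n → Fin m} {c : Fin (m + 1)} :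
    Surjective (Fin.snoc (c.succAbove ∘ v) c : Fin (n + 1) → Fin (m + 1)) ↔ Surjective v := by
  refine ⟨fun h j => ?_, fun h => ?_⟩
  · obtain ⟨i, hi⟩ := h (c.succAbove j)
    induction i using Fin.lastCases with
    | last => exact absurd (by simpa using hi.symm) (Fin.succAbove_ne c j)
    | cast i => exact ⟨i, Fin.succAbove_right_injective (p := c) (by simpa using hi)⟩
  · simp only [← Set.range_eq_univ, Fin.range_snoc, Set.range_comp, h.range_eq, Set.image_univ,
      Fin.range_succAbove, Set.insert_eq, Set.union_compl_self]

end Words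

def fubiniWords (n k : ℕ) : Finset (Fin n → Fin k) :=
  {w | ∀ c, ∃ i, w i = c}

lemma mem_fubiniWords {n k : ℕ} {w : Fin n → Fin k} : w ∈ fubiniWords n k ↔ Surjective w := by
  simp [fubiniWords, Surjective]

section Decomposition

variable {M : Type*} [AddCommMonoid M] {n k m : ℕ}

lemma sum_fubiniWords_filter_last_repeated (g : (Fin (n + 1) → Fin k) → M) :
    ∑ w ∈ fubiniWords (n + 1) k with ∃ i : Fin n, w i.castSucc = w (Fin.last n), g w =
      ∑ w ∈ fubiniWords n k, ∑ c, g (Fin.snoc w c) := by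
  rw [← sum_product']
  refine sum_nbij' (fun w => (Fin.init w, w (Fin.last n))) (fun p => Fin.snoc p.1 p.2)
    (fun w hw => ?_) (fun p hp => ?_) (fun w _ => Fin.snoc_init_self w) (fun p _ => by simp)
    (fun w _ => by rw [Fin.snoc_init_self])
  · simp only [mem_filter, mem_fubiniWords] at hw
    obtain ⟨hsurj, hrep⟩ := hw
    rw [← Fin.snoc_init_self w, surjective_snoc_iff_of_exists (w := Fin.init w) hrep] at hsurj
    simpa [mem_fubiniWords] using hsurj
  · simp only [mem_product, mem_fubiniWords, mem_univ, and_true] at hp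
    obtain ⟨i, hi⟩ := hp p.2
    simp only [mem_filter, mem_fubiniWords, surjective_snoc_iff_of_exists ⟨i, hi⟩, hp,
      Fin.snoc_castSucc, Fin.snoc_last, true_and]
    exact ⟨i, hi⟩

lemma sum_fubiniWords_filter_last_new (g : (Fin (n + 1) → Fin (m + 1)) → M) :
    ∑ w ∈ fubiniWords (n + 1) (m + 1) with ¬∃ i : Fin n, w i.castSucc = w (Fin.last n), g w =
      ∑ c, ∑ v ∈ fubiniWords n m, g (Fin.snoc (c.succAbove ∘ v) c) := by
  rw [← sum_product']
  refine (sum_bij (fun p _ => Fin.snoc (p.1.succAbove ∘ p.2) p.1) (fun p hp => ?_)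
    (fun p _ q _ h => ?_) (fun w hw => ?_) (fun _ _ => rfl)).symm
  · simp only [mem_product, mem_univ, mem_fubiniWords, true_and] at hp
    simp [mem_fubiniWords, surjective_snoc_succAbove_comp_iff, hp, Fin.succAbove_ne]
  · obtain ⟨hv, hc⟩ := Fin.snoc_injective2 h
    rw [hc] at hv
    exact Prod.ext hc (Fin.succAbove_right_injective.comp_left hv)
  · simp only [mem_filter, mem_fubiniWords, not_exists] at hw
    obtain ⟨hsurj, hnew⟩ := hw
    choose v hv using fun i => Fin.exists_succAbove_eq (hnew i)
    have hw : Fin.snoc ((w (Fin.last n)).succAbove ∘ v) (w (Fin.last n)) = w := by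
      ext i : 1
      induction i using Fin.lastCases <;> simp [hv]
    rw [← hw, surjective_snoc_succAbove_comp_iff] at hsurj
    exact ⟨(w (Fin.last n), v), by simpa [mem_fubiniWords] using hsurj, hw⟩

end Decomposition

section Dim

variable {n k m : ℕ}

lemma invStat_eq_invCount (w : Fin n → Fin k) : invStat n k w = invCount (firstOcc n k w) := rfl

lemma posStat_eq_posCount (w : Fin n → Fin k) (c : Fin k) :
    posStat n k w c = posCount (firstOcc n k w) c := rfl

lemma dimStat_snoc_of_surjective {w : Fin n → Fin k} (hw : Surjective w) (c : Fin k) :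
    dimStat (n + 1) k (Fin.snoc w c) = dimStat n k w + (posStat n k w c - 1 : ℕ) := by
  have := one_le_posCount (firstOcc n k w) c
  simp only [dimStat, invStat_eq_invCount, posStat_eq_posCount, firstOcc_snoc_of_surjective hw,
    Fin.sum_univ_castSucc, Fin.snoc_castSucc, Fin.snoc_last]
  push_cast [this]
  ring

lemma dimStat_snoc_succAbove_comp {v : Fin n → Fin m} (hv : Surjective v) (c : Fin (m + 1)) :
    dimStat (n + 1) (m + 1) (Fin.snoc (c.succAbove ∘ v) c) = dimStat n m v + (c : ℕ) := by
  have hlt : ∀ j, firstOcc n m v j < n := fun j => (firstOcc_spec (hv j)).1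
  simp only [dimStat, invStat_eq_invCount, posStat_eq_posCount, firstOcc_snoc_succAbove_comp hv,
    Fin.sum_univ_castSucc, Fin.snoc_castSucc, Fin.snoc_last, comp_apply, invCount_insertNth hlt,
    posCount_insertNth_succAbove hlt, posCount_insertNth_self hlt]
  push_cast [Nat.cast_sub (Nat.lt_succ_iff.1 c.isLt)]
  ring

end Dim

open LaurentPolynomial Polynomial

noncomputable def dimGenFun (n k : ℕ) : LaurentPolynomial ℤ :=
  ∑ w ∈ fubiniWords n k, T (dimStat n k w)

lemma toLaurent_qnat (k : ℕ) : toLaurent (qnat k) = ∑ j ∈ range k, (T j : LaurentPolynomial ℤ) := by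
  simp [qnat]

lemma qFactorial_succ (k : ℕ) : qFactorial (k + 1) = qFactorial k * qnat (k + 1) :=
  prod_range_succ _ _

lemma dimGenFun_succ_succ (n m : ℕ) :
    dimGenFun (n + 1) (m + 1) =
      (dimGenFun n m + dimGenFun n (m + 1)) * toLaurent (qnat (m + 1)) := by
  have hrep : ∀ w ∈ fubiniWords n (m + 1), ∑ c, T (dimStat (n + 1) (m + 1) (Fin.snoc w c)) =
      T (dimStat n (m + 1) w) * toLaurent (qnat (m + 1)) := fun w hw => by
    rw [mem_fubiniWords] at hw
    simp only [dimStat_snoc_of_surjective hw, T_add, ← mul_sum, posStat_eq_posCount,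
      sum_posCount_sub_one (firstOcc_injective hw) (fun j => (T j : LaurentPolynomial ℤ)),
      toLaurent_qnat]
  have hnew : ∀ c : Fin (m + 1), ∑ v ∈ fubiniWords n m,
      T (dimStat (n + 1) (m + 1) (Fin.snoc (c.succAbove ∘ v) c)) = T (c : ℕ) * dimGenFun n m :=
    fun c => by
      rw [dimGenFun, mul_sum]
      refine sum_congr rfl fun v hv => ?_
      rw [dimStat_snoc_succAbove_comp (mem_fubiniWords.1 hv), T_add, mul_comm]
  rw [dimGenFun, ← sum_filter_add_sum_filter_not _
      (fun w => ∃ i : Fin n, w i.castSucc = w (Fin.last n)),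
    sum_fubiniWords_filter_last_repeated, sum_fubiniWords_filter_last_new, sum_congr rfl hrep,
    Fintype.sum_congr _ _ hnew, ← sum_mul, ← sum_mul, ← dimGenFun,
    Fin.sum_univ_eq_sum_range (fun j => (T j : LaurentPolynomial ℤ)), ← toLaurent_qnat]
  ring

lemma dimGenFun_eq (n k : ℕ) : dimGenFun n k = toLaurent (qFactorial k * qStirling n k) := by
  induction n generalizing k with
  | zero =>
    cases k with
    | zero => simp [dimGenFun, fubiniWords, dimStat, invStat, qFactorial, qStirling]
    | succ k => simp [dimGenFun, fubiniWords, qStirling]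
  | succ n ih =>
    cases k with
    | zero => simp [dimGenFun, qStirling, eq_empty_of_isEmpty (fubiniWords (n + 1) 0)]
    | succ m =>
      rw [dimGenFun_succ_succ, ih, ih, qStirling, qFactorial_succ]
      simp only [map_mul, map_add]
      ring

theorem stmt5_general (n k : ℕ) :
    ∑ w ∈ Finset.univ.filter (fun w : Fin n → Fin k => ∀ c, ∃ i, w i = c),
        LaurentPolynomial.T (R := ℤ) (dimStat n k w)
      = Polynomial.toLaurent (qFactorial k * qStirling n k) :=
  dimGenFun_eq n k

/-- The statistic `dim` is Mahonian on the set `W_{n,k}` of words in `{1,…,k}^n` in which all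
letters appear: `∑_{w ∈ W_{n,k}} q^{dim(w)} = [k]!_q · Stir_q(n,k)`. -/
theorem stmt5 (n k : ℕ) (hk : 1 ≤ k) :
    ∑ w ∈ Finset.univ.filter (fun w : Fin n → Fin k => ∀ c, ∃ i, w i = c),
        LaurentPolynomial.T (R := ℤ) (dimStat n k w)
      = Polynomial.toLaurent (qFactorial k * qStirling n k) :=
  stmt5_general n k
end

section
/- Let J be the ideal of Z[x_1,...,x_n] generated by h_{k+1}(x_1,...,x_n), h_{k+2}(x_1,...,x_n), ..., h_{k+i}(x_1,...,x_n) for some 1 <= i <= n. Then the polynomial h_{k+i}(x_i, x_{i+1},...,x_n) lies in J. -/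
/-!
Removing a variable `a` from `S` gives `h_{d+1}(S \ {a}) = h_{d+1}(S) - x_a h_d(S)`.
Iterating this over the `t` variables of `T` writes `h_d(S \ T)` as a polynomial combination
of `h_d(S), h_{d-1}(S), …, h_{d-t}(S)`. For `S = {1, …, n}`, `T = {1, …, i - 1}` and
`d = k + i` these are exactly the generators `h_{k+1}(S), …, h_{k+i}(S)`.
-/

/-- The complete homogeneous symmetric polynomial of degree `d` in the variables `x_i` for
`i ∈ S`: the sum of all monomials of degree `d` in those variables. -/
noncomputable def hIn (S : Finset ℕ) (d : ℕ) : MvPolynomial ℕ ℤ :=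
  ∑ m ∈ S.sym d, (Multiset.map MvPolynomial.X (m : Multiset ℕ)).prod

open Finset

lemma Finset.sym_insert_succ {α : Type*} [DecidableEq α] (a : α) (S : Finset α) (d : ℕ) :
    (insert a S).sym (d + 1) = S.sym (d + 1) ∪ ((insert a S).sym d).image (Sym.cons a) := by
  ext m
  simp only [mem_union, mem_image, mem_sym_iff]
  constructor
  · intro h
    by_cases hm : a ∈ m
    · refine Or.inr ⟨m.erase a hm, fun b hb => h b ?_, Sym.cons_erase hm⟩
      rw [← Sym.cons_erase hm]
      exact Sym.mem_cons_of_mem hb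
    · exact Or.inl fun b hb => (mem_insert.1 (h b hb)).resolve_left fun e => hm (e ▸ hb)
  · rintro (h | ⟨m', hm', rfl⟩) b hb
    · exact mem_insert_of_mem (h b hb)
    · rcases Sym.mem_cons.1 hb with rfl | hb
      · exact mem_insert_self _ _
      · exact hm' b hb

lemma hIn_zero (S : Finset ℕ) : hIn S 0 = 1 := by
  rw [hIn, sym_zero, sum_singleton]
  rfl

lemma hIn_insert (a : ℕ) (S : Finset ℕ) (ha : a ∉ S) (d : ℕ) :
    hIn (insert a S) (d + 1) = hIn S (d + 1) + MvPolynomial.X a * hIn (insert a S) d := by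
  rw [hIn, sym_insert_succ, sum_union, sum_image fun x _ y _ => (Sym.cons_inj_right a x y).1,
    hIn, hIn, mul_sum]
  · simp only [Sym.coe_cons, Multiset.map_cons, Multiset.prod_cons]
  · rw [disjoint_right]
    rintro _ hm hmem
    obtain ⟨m', -, rfl⟩ := mem_image.1 hm
    exact ha (mem_sym_iff.1 hmem a (Sym.mem_cons_self a m'))

lemma hIn_sdiff_mem_span (S T : Finset ℕ) (d : ℕ) :
    hIn (S \ T) d ∈ Ideal.span ((fun l => hIn S (d - l)) '' Set.Iic #T) := by
  induction T using Finset.induction_on generalizing d with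
  | empty => exact Ideal.subset_span ⟨0, by simp⟩
  | insert a T haT ih =>
    rw [card_insert_of_notMem haT]
    have hmono : ∀ e, (fun l => hIn S (e - l)) '' Set.Iic #T ⊆
        (fun l => hIn S (e - l)) '' Set.Iic (#T + 1) :=
      fun e => Set.image_mono (Set.Iic_subset_Iic.2 (Nat.le_succ _))
    rw [sdiff_insert]
    by_cases haS : a ∈ S \ T
    · rcases d with _ | d
      · exact Ideal.subset_span ⟨0, by simp [hIn_zero]⟩
      have hrec := hIn_insert a ((S \ T).erase a) (notMem_erase a _) d
      rw [insert_erase haS] at hrec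
      rw [eq_sub_of_add_eq hrec.symm]
      refine Ideal.sub_mem _ (Ideal.span_mono (hmono _) (ih _)) (Ideal.mul_mem_left _ _ ?_)
      refine Ideal.span_mono ?_ (ih d)
      rintro _ ⟨l, hl, rfl⟩
      exact ⟨l + 1, Nat.succ_le_succ hl, by simp⟩
    · rw [erase_eq_of_notMem haS]
      exact Ideal.span_mono (hmono d) (ih d)

theorem stmt14_general (n k i : ℕ) (hi : 1 ≤ i) :
    hIn (Finset.Icc i n) (k + i) ∈
      Ideal.span ((fun j => hIn (Finset.Icc 1 n) (k + j)) '' Set.Icc 1 i) := by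
  have hsdiff : Icc 1 n \ Ico 1 i = Icc i n := by
    ext x
    simp only [mem_sdiff, mem_Icc, mem_Ico]
    omega
  have h := hIn_sdiff_mem_span (Icc 1 n) (Ico 1 i) (k + i)
  rw [hsdiff, Nat.card_Ico] at h
  refine Ideal.span_mono ?_ h
  rintro _ ⟨l, hl, rfl⟩
  rw [Set.mem_Iic] at hl
  refine ⟨i - l, ⟨by omega, by omega⟩, ?_⟩
  simp only [Nat.add_sub_assoc (show l ≤ i by omega)]

/-- If `J` is the ideal of `ℤ[x₁, …, x_n]` generated by
`h_{k+1}(x₁,…,x_n), …, h_{k+i}(x₁,…,x_n)`, then `h_{k+i}(x_i, x_{i+1}, …, x_n) ∈ J`. -/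
theorem stmt14 (n k i : ℕ) (hk : 0 < k) (hi : 1 ≤ i) (hin : i ≤ n) :
    hIn (Finset.Icc i n) (k + i) ∈
      Ideal.span ((fun j => hIn (Finset.Icc 1 n) (k + j)) '' Set.Icc 1 i) :=
  stmt14_general n k i hi
end
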